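/- arXiv:0802.0563 — 6 statements merged into one kernel-verified Lean document; each statement's English description precedes it below -/
import Mathlib

section
/- Let q = (√3 − 1)/2 and let f : ℝ → ℝ be a solution of Schilling's problem for q. Then f(x) = 0 for every x in the set ℤ + qℤ = {m + nq : m, n ∈ ℤ}. -/
/-!
Since `2q² + 2q = 1`, we have `1/q = 2 + 2q`, so multiplication by `q` maps the lattice
`ℤ + qℤ` to itself: `q · ((2m + n) + 2m q) = m + n q`. The functional equation therefore
expresses `f (m + n q)` through the values of `f` at the three lattice points `k + 2m q`,
`|k - (2m + n)| ≤ 1`. If `m + n q` lies in the support interval `[-Q, Q]` (`Q = 1/√3`) then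
`|2m| < |n|` except at the five points `0, ±(1 - 2q), ±(2 - 4q)`, which gives a strong induction
on `|n|`. At `0` and at the pair `±(1 - 2q)` the equation closes up on itself, and there it
forces the values to vanish because `4q ≠ 2` and `16q² ≠ 1`.
-/

open Real

structure IsSchillingSolution (q : ℝ) (f : ℝ → ℝ) : Prop where
  map_mul : ∀ x, f (q * x) = 1 / (4 * q) * (f (x - 1) + f (x + 1) + 2 * f x)
  eq_zero_of_lt_abs : ∀ x, q / (1 - q) < |x| → f x = 0

theorem two_mul_sq_add_two_mul_eq_one {q : ℝ} (hq : q = (√3 - 1) / 2) :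
    2 * q ^ 2 + 2 * q = 1 := by
  subst hq
  linear_combination sq_sqrt (show (0 : ℝ) ≤ 3 by norm_num) / 2

theorem mem_Ioo_of_eq_sqrt_three {q : ℝ} (hq : q = (√3 - 1) / 2) :
    q ∈ Set.Ioo (7 / 20) (3 / 8) := by
  have h₁ : 17 / 10 < √3 := (lt_sqrt (by norm_num)).2 (by norm_num)
  have h₂ : √3 < 7 / 4 := (sqrt_lt' (by norm_num)).2 (by norm_num)
  constructor <;> linarith

theorem lattice_cases_of_abs_le {q : ℝ} (hq₀ : 0 ≤ q) (hq : q < 3 / 8) {m n : ℤ}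
    (hin : |(m : ℝ) + n * q| ≤ 3 / 5) (hn : n.natAbs ≤ (2 * m).natAbs) :
    (m = 0 ∧ n = 0) ∨ (m = 1 ∧ n = -2) ∨ (m = -1 ∧ n = 2) ∨ (m = 2 ∧ n = -4) ∨
      (m = -2 ∧ n = 4) := by
  have hnm : |(n : ℝ)| ≤ 2 * |(m : ℝ)| := by
    have : (n.natAbs : ℝ) ≤ ((2 * m).natAbs : ℝ) := by exact_mod_cast hn
    simpa [Nat.cast_natAbs, abs_mul] using this
  have hm : |(m : ℝ)| < 3 := by
    have htri : |(m : ℝ)| ≤ |(m : ℝ) + n * q| + |(n : ℝ)| * q := by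
      calc |(m : ℝ)| = |((m : ℝ) + n * q) - n * q| := by ring_nf
        _ ≤ |(m : ℝ) + n * q| + |(n : ℝ) * q| := abs_sub _ _
        _ = |(m : ℝ) + n * q| + |(n : ℝ)| * q := by rw [abs_mul, abs_of_nonneg hq₀]
    nlinarith [mul_le_mul_of_nonneg_right hnm hq₀, abs_nonneg (m : ℝ)]
  have hm' : m.natAbs < 3 := by
    have : (m.natAbs : ℝ) < 3 := by rwa [Nat.cast_natAbs, Int.cast_abs]
    exact_mod_cast this
  obtain ⟨hlo, hhi⟩ := abs_le.1 hin
  have hm₁ : -2 ≤ m := by omega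
  have hm₂ : m ≤ 2 := by omega
  have hn₁ : -4 ≤ n := by omega
  have hn₂ : n ≤ 4 := by omega
  interval_cases m <;> interval_cases n <;> first | omega | (push_cast at hlo hhi; linarith)

namespace IsSchillingSolution

variable {q : ℝ} {f : ℝ → ℝ}

theorem four_mul_mul_map_mul (hf : IsSchillingSolution q f) (hq : q ≠ 0) (x : ℝ) :
    4 * q * f (q * x) = f (x - 1) + f (x + 1) + 2 * f x := by
  rw [hf.map_mul]
  field_simp

theorem eq_zero_of_three_fifths_lt_abs (hf : IsSchillingSolution q f) (hq : q < 3 / 8) (y : ℝ)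
    (hy : 3 / 5 < |y|) : f y = 0 :=
  hf.eq_zero_of_lt_abs y <| lt_of_le_of_lt (by rw [div_le_iff₀ (by linarith)]; linarith) hy

theorem lattice_eq_zero_of_children (hf : IsSchillingSolution q f)
    (hq : 2 * q ^ 2 + 2 * q = 1) (m n : ℤ)
    (h : ∀ k : ℤ, (k - (2 * m + n)).natAbs ≤ 1 → f (k + (2 * m : ℤ) * q) = 0) :
    f (m + n * q) = 0 := by
  have hq₀ : q ≠ 0 := by rintro rfl; norm_num at hq
  obtain ⟨x, hx⟩ : ∃ x : ℝ, x = 2 * m + n + 2 * m * q := ⟨_, rfl⟩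
  have hparent : (m : ℝ) + n * q = q * x := by rw [hx]; linear_combination (-m : ℝ) * hq
  have child : ∀ δ : ℤ, δ.natAbs ≤ 1 → f (x + δ) = 0 := fun δ hδ => by
    convert h (2 * m + n + δ) (by omega) using 2
    push_cast
    rw [hx]
    ring
  have hl : f (x - 1) = 0 := by simpa [sub_eq_add_neg] using child (-1) le_rfl
  have h₀ : f x = 0 := by simpa using child 0 zero_le_one
  have hr : f (x + 1) = 0 := by simpa using child 1 le_rfl
  have key := hf.four_mul_mul_map_mul hq₀ x
  rw [hl, h₀, hr, ← hparent] at key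
  simpa [hq₀] using key

theorem apply_zero (hf : IsSchillingSolution q f) (hq : q = (√3 - 1) / 2) : f 0 = 0 := by
  obtain ⟨hq₁, hq₂⟩ := mem_Ioo_of_eq_sqrt_three hq
  have e := hf.four_mul_mul_map_mul (by linarith) 0
  rw [mul_zero, zero_sub, zero_add, hf.eq_zero_of_three_fifths_lt_abs hq₂ (-1) (by norm_num),
    hf.eq_zero_of_three_fifths_lt_abs hq₂ 1 (by norm_num)] at e
  have h : (4 * q - 2) * f 0 = 0 := by linear_combination e
  exact (mul_eq_zero.1 h).resolve_left (by linarith)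

theorem apply_one_sub_two_mul (hf : IsSchillingSolution q f) (hq : q = (√3 - 1) / 2) :
    f (1 - 2 * q) = 0 ∧ f (2 * q - 1) = 0 := by
  obtain ⟨hq₁, hq₂⟩ := mem_Ioo_of_eq_sqrt_three hq
  have hsq := two_mul_sq_add_two_mul_eq_one hq
  have hout : ∀ y, 3 / 5 < y ∨ y < -(3 / 5) → f y = 0 := fun y hy =>
    hf.eq_zero_of_three_fifths_lt_abs hq₂ y (lt_abs.2 (hy.imp id fun h => by linarith))
  have e₁ := hf.four_mul_mul_map_mul (by linarith) (2 * q)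
  rw [show q * (2 * q) = 1 - 2 * q by linear_combination hsq,
    hout (2 * q + 1) (by left; linarith), hout (2 * q) (by left; linarith)] at e₁
  have e₂ := hf.four_mul_mul_map_mul (by linarith) (-(2 * q))
  rw [show q * -(2 * q) = 2 * q - 1 by linear_combination -hsq,
    show -(2 * q) + 1 = 1 - 2 * q by ring,
    hout (-(2 * q) - 1) (by right; linarith), hout (-(2 * q)) (by right; linarith)] at e₂
  have h : (16 * q ^ 2 - 1) * f (1 - 2 * q) = 0 := by linear_combination 4 * q * e₁ + e₂
  have h₁ : f (1 - 2 * q) = 0 := (mul_eq_zero.1 h).resolve_left (by nlinarith)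
  exact ⟨h₁, by linear_combination -e₁ + 4 * q * h₁⟩

theorem lattice_eq_zero (hf : IsSchillingSolution q f) (hq : q = (√3 - 1) / 2) (m n : ℤ) :
    f (m + n * q) = 0 := by
  obtain ⟨hq₁, hq₂⟩ := mem_Ioo_of_eq_sqrt_three hq
  have hsq := two_mul_sq_add_two_mul_eq_one hq
  induction hN : n.natAbs using Nat.strong_induction_on generalizing m n with
  | _ N ih =>
  have descent : ∀ m' n' : ℤ, n'.natAbs ≤ N → (2 * m').natAbs < n'.natAbs →
      f (m' + n' * q) = 0 := fun m' n' hn' hlt =>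
    hf.lattice_eq_zero_of_children hsq m' n' fun k _ => ih _ (by omega) k (2 * m') rfl
  by_cases hout : 3 / 5 < |(m : ℝ) + n * q|
  · exact hf.eq_zero_of_three_fifths_lt_abs hq₂ _ hout
  by_cases hlt : (2 * m).natAbs < n.natAbs
  · exact descent m n hN.le hlt
  rcases lattice_cases_of_abs_le (by linarith) hq₂ (not_lt.1 hout) (not_lt.1 hlt)
    with ⟨rfl, rfl⟩ | ⟨rfl, rfl⟩ | ⟨rfl, rfl⟩ | ⟨rfl, rfl⟩ | ⟨rfl, rfl⟩
  · simpa using hf.apply_zero hq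
  · convert (hf.apply_one_sub_two_mul hq).1 using 2; push_cast; ring
  · convert (hf.apply_one_sub_two_mul hq).2 using 2; push_cast; ring
  · exact hf.lattice_eq_zero_of_children hsq 2 (-4) fun k hk =>
      descent k (2 * 2) (by omega) (by omega)
  · exact hf.lattice_eq_zero_of_children hsq (-2) 4 fun k hk =>
      descent k (2 * -2) (by omega) (by omega)

end IsSchillingSolution

theorem schilling_sqrt3 (q : ℝ) (hq : q = (Real.sqrt 3 - 1) / 2)
    (f : ℝ → ℝ)
    (hfe : ∀ x : ℝ, f (q * x) = (1 / (4 * q)) * (f (x - 1) + f (x + 1) + 2 * f x))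
    (hfv : ∀ x : ℝ, |x| > q / (1 - q) → f x = 0) :
    ∀ m n : ℤ, f ((m : ℝ) + (n : ℝ) * q) = 0 :=
  fun m n => IsSchillingSolution.lattice_eq_zero ⟨hfe, hfv⟩ hq m n
end

section
/- Let q = (3 − √5)/2 and let f : ℝ → ℝ be a solution of Schilling's problem for q. Then f(x) = 0 for every x in the set ℤ + qℤ = {m + nq : m, n ∈ ℤ}. -/
/-!
For `q = (3 - √5) / 2` we have `q² = 3q - 1` and `q / (1 - q) = 1 - q`, so
`m + nq = q · ((3m + n) - mq)`: the functional equation expresses `f (m + nq)` through three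
lattice points with `q`-coefficient `-m`. A lattice point with `|n| ≥ 2` outside the support
bound `|x| > 1 - q` already has `f = 0`, and inside it `|m| < |n|`; so induction on `|n|` reduces
everything to `|n| ≤ 1`. There only `0`, `±q` and `±(1 - q)` lie in the support interval, and
each of them is killed by one instance of the equation, using the symmetry `x ↦ -x`.
-/

theorem golden_sq_eq {q : ℝ} (hq : q = (3 - Real.sqrt 5) / 2) : q ^ 2 = 3 * q - 1 := by
  subst hq; linear_combination (1 / 4 : ℝ) * Real.sq_sqrt (show (0 : ℝ) ≤ 5 by norm_num)

theorem golden_bounds {q : ℝ} (hq : q = (3 - Real.sqrt 5) / 2) : 1 / 4 < q ∧ q < 1 / 2 := by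
  have h5 := Real.sq_sqrt (show (0 : ℝ) ≤ 5 by norm_num)
  have := Real.sqrt_nonneg 5
  subst hq; constructor <;> nlinarith

theorem golden_div_one_sub {q : ℝ} (hq : q = (3 - Real.sqrt 5) / 2) : q / (1 - q) = 1 - q := by
  have := golden_bounds hq
  rw [div_eq_iff (by linarith)]
  linear_combination -golden_sq_eq hq

theorem Int.natAbs_lt_natAbs_of_abs_add_mul_le {q : ℝ} (hq₀ : 0 < q) (hq₁ : q < 1) {m n : ℤ}
    (hn : 2 ≤ n.natAbs) (h : |(m : ℝ) + n * q| ≤ 1 - q) : m.natAbs < n.natAbs := by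
  have hn' : (2 : ℝ) ≤ |(n : ℝ)| := by
    rw [← Int.cast_abs, ← Nat.cast_natAbs]; exact_mod_cast hn
  have htri : |(m : ℝ)| ≤ |(m : ℝ) + n * q| + |(n : ℝ)| * q := by
    simpa [abs_mul, abs_of_pos hq₀] using abs_sub ((m : ℝ) + n * q) (n * q)
  have : ((m.natAbs : ℕ) : ℝ) < n.natAbs := by
    simp only [Nat.cast_natAbs, Int.cast_abs]; nlinarith
  exact_mod_cast this

structure IsSchillingSolution_s1 (q : ℝ) (f : ℝ → ℝ) : Prop where
  map_mul : ∀ x, f (q * x) = 1 / (4 * q) * (f (x - 1) + f (x + 1) + 2 * f x)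
  eq_zero_of_lt_abs : ∀ x, q / (1 - q) < |x| → f x = 0

namespace IsSchillingSolution_s1

variable {q : ℝ} {f : ℝ → ℝ}

theorem comp_neg (hf : IsSchillingSolution_s1 q f) : IsSchillingSolution_s1 q (fun x ↦ f (-x)) where
  map_mul x := by
    simp only [← mul_neg, hf.map_mul (-x), neg_sub', neg_add', sub_neg_eq_add]
    ring
  eq_zero_of_lt_abs x hx := hf.eq_zero_of_lt_abs (-x) (by rwa [abs_neg])

theorem map_zero (hf : IsSchillingSolution_s1 q f) (hq₀ : 0 < q) (hq : q < 1 / 2) : f 0 = 0 := by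
  have hQ : q / (1 - q) < 1 := by rw [div_lt_one (by linarith)]; linarith
  have h := hf.map_mul 0
  rw [mul_zero, zero_sub, zero_add, hf.eq_zero_of_lt_abs 1 (by simpa),
    hf.eq_zero_of_lt_abs (-1) (by simpa)] at h
  field_simp at h
  nlinarith

theorem eq_zero_of_one_sub_lt_abs (hf : IsSchillingSolution_s1 q f)
    (hq : q = (3 - Real.sqrt 5) / 2) {x : ℝ} (hx : 1 - q < |x|) : f x = 0 :=
  hf.eq_zero_of_lt_abs x (by rwa [golden_div_one_sub hq])

theorem map_intCast (hf : IsSchillingSolution_s1 q f) (hq : q = (3 - Real.sqrt 5) / 2) (m : ℤ) :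
    f m = 0 := by
  obtain ⟨hq₀, hq₁⟩ := golden_bounds hq
  rcases eq_or_ne m 0 with rfl | hm
  · simpa using hf.map_zero (by linarith) hq₁
  · refine hf.eq_zero_of_one_sub_lt_abs hq ?_
    have : (1 : ℝ) ≤ |(m : ℝ)| := by rw [← Int.cast_abs]; exact_mod_cast Int.one_le_abs hm
    linarith

theorem map_intCast_add (hf : IsSchillingSolution_s1 q f) (hq : q = (3 - Real.sqrt 5) / 2)
    (m : ℤ) : f (m + q) = 0 := by
  obtain ⟨hq₀, hq₁⟩ := golden_bounds hq
  have hf_two : f 2 = 0 := hf.eq_zero_of_one_sub_lt_abs hq (by rw [abs_two]; linarith)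
  rcases (by omega : m = 0 ∨ m = -1 ∨ 1 ≤ m ∨ m ≤ -2) with rfl | rfl | hm | hm
  · have h := hf.map_mul 1
    norm_num only [mul_one] at h
    have hf_one : f 1 = 0 := hf.eq_zero_of_one_sub_lt_abs hq (by rw [abs_one]; linarith)
    simp [h, hf.map_zero (by linarith) hq₁, hf_two, hf_one]
  · -- `q - 1 = q * (q - 2)` feeds `f (q - 1)` back into its own equation.
    have hf_sub_two : f (q - 2) = 0 :=
      hf.eq_zero_of_one_sub_lt_abs hq (by rw [abs_of_neg (by linarith)]; linarith)
    have hf_sub_three : f (q - 2 - 1) = 0 :=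
      hf.eq_zero_of_one_sub_lt_abs hq (by rw [abs_of_neg (by linarith)]; linarith)
    have h := hf.map_mul (q - 2)
    rw [show q * (q - 2) = q - 1 by linear_combination golden_sq_eq hq,
      show q - 2 + 1 = q - 1 by ring, hf_sub_two, hf_sub_three] at h
    push_cast
    field_simp at h
    rw [neg_add_eq_sub]
    nlinarith
  · refine hf.eq_zero_of_one_sub_lt_abs hq (lt_of_lt_of_le ?_ (le_abs_self _))
    have : (1 : ℝ) ≤ m := by exact_mod_cast hm
    linarith
  · refine hf.eq_zero_of_one_sub_lt_abs hq (lt_of_lt_of_le ?_ (neg_le_abs _))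
    have : (m : ℝ) ≤ -2 := by exact_mod_cast hm
    linarith

theorem map_intCast_sub (hf : IsSchillingSolution_s1 q f) (hq : q = (3 - Real.sqrt 5) / 2)
    (m : ℤ) : f (m - q) = 0 := by
  simpa [neg_add_eq_sub] using hf.comp_neg.map_intCast_add hq (-m)

theorem map_intCast_add_intCast_mul (hf : IsSchillingSolution_s1 q f)
    (hq : q = (3 - Real.sqrt 5) / 2) (m n : ℤ) : f (m + n * q) = 0 := by
  obtain ⟨hq₀, hq₁⟩ := golden_bounds hq
  induction hk : n.natAbs using Nat.strong_induction_on generalizing m n with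
  | _ k ih =>
  subst hk
  rcases (by omega : n = 0 ∨ n = 1 ∨ n = -1 ∨ 2 ≤ n.natAbs) with rfl | rfl | rfl | hn
  · simpa using hf.map_intCast hq m
  · simpa using hf.map_intCast_add hq m
  · simpa [← sub_eq_add_neg] using hf.map_intCast_sub hq m
  by_cases hx : 1 - q < |(m : ℝ) + n * q|
  · exact hf.eq_zero_of_one_sub_lt_abs hq hx
  have hm : (-m).natAbs < n.natAbs := by
    rw [Int.natAbs_neg]
    exact Int.natAbs_lt_natAbs_of_abs_add_mul_le (by linarith) (by linarith) hn (not_lt.mp hx)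
  have hlower (j : ℤ) : f (j - m * q) = 0 := by
    simpa [← sub_eq_add_neg] using ih _ hm j (-m) rfl
  have hdiv : (m : ℝ) + n * q = q * (((3 * m + n : ℤ) : ℝ) - m * q) := by
    push_cast; linear_combination m * golden_sq_eq hq
  set a := 3 * m + n
  have hprev : f (a - 1 - m * q) = 0 := by exact_mod_cast hlower (a - 1)
  have hnext : f (a + 1 - m * q) = 0 := by exact_mod_cast hlower (a + 1)
  rw [hdiv, hf.map_mul, sub_right_comm, sub_add_eq_add_sub, hprev, hnext, hlower]
  simp

end IsSchillingSolution_s1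

theorem schilling_35 (q : ℝ) (hq : q = (3 - Real.sqrt 5) / 2)
    (f : ℝ → ℝ)
    (hfe : ∀ x : ℝ, f (q * x) = (1 / (4 * q)) * (f (x - 1) + f (x + 1) + 2 * f x))
    (hfv : ∀ x : ℝ, |x| > q / (1 - q) → f x = 0) :
    ∀ m n : ℤ, f ((m : ℝ) + (n : ℝ) * q) = 0 :=
  IsSchillingSolution_s1.map_intCast_add_intCast_mul ⟨hfe, hfv⟩ hq
end

section
/- Let q = √2 − 1 and let f : ℝ → ℝ be a solution of Schilling's problem for q. Then f(x) = 0 for every x in the set ℤ + qℤ = {m + nq : m, n ∈ ℤ}. -/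
/-!
Write `q = √2 - 1`. The lattice `ℤ + qℤ` is the image of `ℤ[√2]` under its real embedding `ι`,
and dividing by `q` is multiplication by the unit `1 + √2`. The functional equation expresses
`f (ι z)` through the values at `ι (z * (1 + √2) + e)`, `e ∈ {-1, 0, 1}`, and under the Galois
conjugation `√2 ↦ -√2` these points are obtained by the contraction `t ↦ -q t + e`. Descending
along it reduces everything to points whose conjugate has absolute value at most `2`. Such a point
is either `0`, where `f` vanishes because `2q ≠ 1`, or lies outside `[-Q, Q]` with `Q = √2 / 2`.
-/

open Zsqrtd

structure IsSchillingSolution_s2 (q : ℝ) (f : ℝ → ℝ) : Prop where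
  apply_mul : ∀ x : ℝ, f (q * x) = (1 / (4 * q)) * (f (x - 1) + f (x + 1) + 2 * f x)
  eq_zero_of_lt_abs : ∀ x : ℝ, q / (1 - q) < |x| → f x = 0

theorem IsSchillingSolution_s2.apply_zero {q : ℝ} {f : ℝ → ℝ} (hf : IsSchillingSolution_s2 q f)
    (hq₀ : 0 < q) (hq : q < 1 / 2) : f 0 = 0 := by
  have hQ : q / (1 - q) < 1 := by rw [div_lt_one (by linarith)]; linarith
  have h := hf.apply_mul 0
  rw [mul_zero, zero_sub, zero_add, hf.eq_zero_of_lt_abs (-1) (by simpa using hQ),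
    hf.eq_zero_of_lt_abs 1 (by simpa using hQ)] at h
  field_simp at h
  nlinarith

theorem sqrt_two_bounds : 4 / 3 < √2 ∧ √2 < 3 / 2 :=
  ⟨by rw [Real.lt_sqrt (by norm_num)]; norm_num, Real.sqrt_two_lt_three_halves⟩

theorem sqrt_two_sub_one_div : (√2 - 1) / (1 - (√2 - 1)) = √2 / 2 := by
  rw [div_eq_div_iff (by linarith [sqrt_two_bounds.2]) two_ne_zero]
  linear_combination Real.sq_sqrt (zero_le_two (α := ℝ))

local notation "ι" => toReal (d := 2) zero_le_two

theorem toReal_two_apply (z : ℤ√2) : ι z = z.re + z.im * √2 := by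
  simp [toReal_apply]

theorem toReal_two_star_apply (z : ℤ√2) : ι (star z) = z.re - z.im * √2 := by
  simp [toReal_apply, sub_eq_add_neg]

theorem sqrt_two_sub_one_mul_toReal_mul (z : ℤ√2) : (√2 - 1) * ι (z * ⟨1, 1⟩) = ι z := by
  simp only [toReal_two_apply, re_mul, im_mul]
  push_cast
  linear_combination ((z.re : ℝ) + z.im) * Real.sq_sqrt (zero_le_two (α := ℝ))

theorem toReal_star_mul (z : ℤ√2) : ι (star (z * ⟨1, 1⟩)) = -(√2 - 1) * ι (star z) := by
  simp only [toReal_two_star_apply, re_mul, im_mul]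
  push_cast
  linear_combination (-(z.im : ℝ)) * Real.sq_sqrt (zero_le_two (α := ℝ))

theorem eq_zero_of_abs_toReal_le (z : ℤ√2) (h : |ι z| ≤ √2 / 2) (hs : |ι (star z)| ≤ 2) :
    z = 0 := by
  obtain ⟨hlo, hhi⟩ := sqrt_two_bounds
  rw [toReal_two_apply] at h
  rw [toReal_two_star_apply] at hs
  have him : z.im = 0 := by
    rw [← Int.abs_lt_one_iff, ← Int.cast_lt (R := ℝ), Int.cast_abs, Int.cast_one]
    have : |2 * √2 * (z.im : ℝ)| ≤ √2 / 2 + 2 := by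
      calc |2 * √2 * (z.im : ℝ)| = |(z.re + z.im * √2) - (z.re - z.im * √2)| := by ring_nf
        _ ≤ |(z.re + z.im * √2 : ℝ)| + |(z.re - z.im * √2 : ℝ)| := abs_sub _ _
        _ ≤ √2 / 2 + 2 := add_le_add h hs
    rw [abs_mul, abs_of_pos (by positivity)] at this
    nlinarith [abs_nonneg (z.im : ℝ)]
  have hre : z.re = 0 := by
    rw [← Int.abs_lt_one_iff, ← Int.cast_lt (R := ℝ), Int.cast_abs, Int.cast_one]
    rw [him, Int.cast_zero, zero_mul, add_zero] at h
    linarith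
  exact Zsqrtd.ext hre him

/- The bounds `2 + k q²` are adapted to the contraction `t ↦ -q t + e`:
`q (2 + (k + 1) q²) + 1 ≤ 2 + k q²` because `1 - 2q = q²`. -/
theorem abs_toReal_star_mul_add_le (k : ℕ) (z : ℤ√2) (e : ℤ) (he : |e| ≤ 1)
    (hz : |ι (star z)| ≤ 2 + (k + 1) * (√2 - 1) ^ 2) :
    |ι (star (z * ⟨1, 1⟩ + e))| ≤ 2 + k * (√2 - 1) ^ 2 := by
  obtain ⟨hlo, hhi⟩ := sqrt_two_bounds
  have he' : |(e : ℝ)| ≤ 1 := by exact_mod_cast he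
  rw [star_add, map_add, toReal_star_mul, star_intCast, map_intCast]
  calc |-(√2 - 1) * ι (star z) + e| ≤ (√2 - 1) * |ι (star z)| + 1 := by
        refine (abs_add_le _ _).trans (add_le_add (le_of_eq ?_) he')
        rw [abs_mul, abs_neg, abs_of_pos (by linarith)]
    _ ≤ (√2 - 1) * (2 + (k + 1) * (√2 - 1) ^ 2) + 1 := by gcongr; linarith
    _ ≤ 2 + k * (√2 - 1) ^ 2 := by
        have hsq := Real.sq_sqrt (zero_le_two (α := ℝ))
        have hk : (0 : ℝ) ≤ k := k.cast_nonneg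
        nlinarith [mul_nonneg hk (by linarith : (0 : ℝ) ≤ 2 - √2)]

namespace IsSchillingSolution_s2

variable {f : ℝ → ℝ}

theorem apply_toReal_eq_zero_of_abs_star_le_two (hf : IsSchillingSolution_s2 (√2 - 1) f)
    (z : ℤ√2) (hz : |ι (star z)| ≤ 2) : f (ι z) = 0 := by
  obtain ⟨hlo, hhi⟩ := sqrt_two_bounds
  by_cases h : (√2 - 1) / (1 - (√2 - 1)) < |ι z|
  · exact hf.eq_zero_of_lt_abs _ h
  · rw [sqrt_two_sub_one_div, not_lt] at h
    rw [eq_zero_of_abs_toReal_le z h hz, map_zero]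
    exact hf.apply_zero (by linarith) (by linarith)

theorem apply_toReal_eq_zero_of_abs_star_le (hf : IsSchillingSolution_s2 (√2 - 1) f) (k : ℕ)
    (z : ℤ√2) (hz : |ι (star z)| ≤ 2 + k * (√2 - 1) ^ 2) : f (ι z) = 0 := by
  induction k generalizing z with
  | zero => exact hf.apply_toReal_eq_zero_of_abs_star_le_two z (by simpa using hz)
  | succ k ih =>
    have hy (e : ℤ) (he : |e| ≤ 1) : f (ι (z * ⟨1, 1⟩) + e) = 0 := by
      have := ih _ (abs_toReal_star_mul_add_le k z e he (by exact_mod_cast hz))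
      rwa [map_add, map_intCast] at this
    have hm : f (ι (z * ⟨1, 1⟩) - 1) = 0 := by simpa [sub_eq_add_neg] using hy (-1) (by norm_num)
    have hp : f (ι (z * ⟨1, 1⟩) + 1) = 0 := by simpa using hy 1 (by norm_num)
    have h0 : f (ι (z * ⟨1, 1⟩)) = 0 := by simpa using hy 0 (by norm_num)
    rw [← sqrt_two_sub_one_mul_toReal_mul, hf.apply_mul, hm, hp, h0]
    ring

end IsSchillingSolution_s2

theorem schilling_sqrt2 (q : ℝ) (hq : q = Real.sqrt 2 - 1)
    (f : ℝ → ℝ)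
    (hfe : ∀ x : ℝ, f (q * x) = (1 / (4 * q)) * (f (x - 1) + f (x + 1) + 2 * f x))
    (hfv : ∀ x : ℝ, |x| > q / (1 - q) → f x = 0) :
    ∀ m n : ℤ, f ((m : ℝ) + (n : ℝ) * q) = 0 := by
  subst hq
  intro m n
  have hq₂ : (0 : ℝ) < (√2 - 1) ^ 2 := by nlinarith [sqrt_two_bounds.1]
  obtain ⟨k, hk⟩ := exists_nat_ge (|ι (star (⟨m - n, n⟩ : ℤ√2))| / (√2 - 1) ^ 2)
  have h := IsSchillingSolution_s2.apply_toReal_eq_zero_of_abs_star_le ⟨hfe, hfv⟩ k ⟨m - n, n⟩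
    (by rw [div_le_iff₀ hq₂] at hk; linarith)
  rw [toReal_two_apply] at h
  convert h using 2
  push_cast
  ring
end

section
/- Let q ∈ (0,1), Q = q/(1−q), and let f : ℝ → ℝ be a solution of Schilling's problem for q. If there exists δ > 0 such that f vanishes on the interval (Q − δ, Q], then f vanishes everywhere on ℝ. -/
/-!
Write `Q = q/(1-q)`, so that `Q = q(Q+1)`. Reading the functional equation at `z + 1`,
`4q f(q(z+1)) = f z + f(z+2) + 2 f(z+1)`, shows that if `f` vanishes on `(a, ∞)` then it vanishes at
every `z` with `z + 1 > a` and `q(z+1) > a`. For `a ≤ Q - δ` this moves the threshold down by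
`min 1 ((1-q)/q · δ)`, a step that does not shrink as `a` decreases, so iterating it pushes the
vanishing region over all of `ℝ`.
-/

section Schilling

variable {q : ℝ} {f : ℝ → ℝ}

theorem schilling_eq_zero_of_vanish_Ioi (hq : q ≠ 0)
    (hfe : ∀ x : ℝ, f (q * x) = (1 / (4 * q)) * (f (x - 1) + f (x + 1) + 2 * f x))
    {a : ℝ} (ha : ∀ x, a < x → f x = 0) {z : ℝ} (hz : a < z + 1) (hqz : a < q * (z + 1)) :
    f z = 0 := by
  have h := hfe (z + 1)
  rw [ha _ hqz, ha (z + 1 + 1) (by linarith), ha _ hz, add_sub_cancel_right] at h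
  simpa [hq] using h

theorem schilling_vanish_Ioi_sub (hq : q ∈ Set.Ioo (0 : ℝ) 1)
    (hfe : ∀ x : ℝ, f (q * x) = (1 / (4 * q)) * (f (x - 1) + f (x + 1) + 2 * f x))
    {a δ : ℝ} (ha : ∀ x, a < x → f x = 0) (haδ : a ≤ q / (1 - q) - δ) :
    ∀ x, a - min 1 ((1 - q) / q * δ) < x → f x = 0 := by
  obtain ⟨hq0, hq1⟩ := hq
  intro z hz
  refine schilling_eq_zero_of_vanish_Ioi hq0.ne' hfe ha ?_ ?_
  · linarith [min_le_left 1 ((1 - q) / q * δ)]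
  · -- `q (a - c + 1) - a = (1-q)(Q - a) - q c ≥ (1-q) δ - q c ≥ 0` for `c = min 1 ((1-q)/q · δ)`
    have hQa : (1 - q) * δ ≤ (1 - q) * (q / (1 - q) - a) :=
      mul_le_mul_of_nonneg_left (by linarith) (by linarith)
    have hc : q * min 1 ((1 - q) / q * δ) ≤ (1 - q) * δ :=
      calc q * min 1 ((1 - q) / q * δ) ≤ q * ((1 - q) / q * δ) :=
            mul_le_mul_of_nonneg_left (min_le_right _ _) hq0.le
        _ = (1 - q) * δ := by field_simp
    have hQ : (1 - q) * (q / (1 - q) - a) = q - (1 - q) * a := by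
      field_simp [(by linarith : (1 - q) ≠ 0)]
    have hqz := mul_lt_mul_of_pos_left (add_lt_add_right hz 1) hq0
    linarith

theorem schilling_vanish_Ioi_sub_nat_mul (hq : q ∈ Set.Ioo (0 : ℝ) 1)
    (hfe : ∀ x : ℝ, f (q * x) = (1 / (4 * q)) * (f (x - 1) + f (x + 1) + 2 * f x))
    {δ : ℝ} (hδ0 : 0 ≤ δ) (hδ : ∀ x, q / (1 - q) - δ < x → f x = 0) (n : ℕ) :
    ∀ x, q / (1 - q) - δ - n * min 1 ((1 - q) / q * δ) < x → f x = 0 := by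
  induction n with
  | zero => simpa using hδ
  | succ n ih =>
    have hc : 0 ≤ min 1 ((1 - q) / q * δ) :=
      le_min zero_le_one (mul_nonneg (div_nonneg (by linarith [hq.2]) hq.1.le) hδ0)
    have step := schilling_vanish_Ioi_sub (δ := δ) hq hfe ih
      (by nlinarith [(Nat.cast_nonneg n : (0 : ℝ) ≤ n)])
    intro x hx
    exact step x (by push_cast at hx; linarith)

end Schilling

theorem schilling_vanish_right (q : ℝ) (hq : q ∈ Set.Ioo (0 : ℝ) 1)
    (f : ℝ → ℝ)
    (hfe : ∀ x : ℝ, f (q * x) = (1 / (4 * q)) * (f (x - 1) + f (x + 1) + 2 * f x))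
    (hfv : ∀ x : ℝ, |x| > q / (1 - q) → f x = 0)
    (hδ : ∃ δ > (0 : ℝ), ∀ x ∈ Set.Ioc (q / (1 - q) - δ) (q / (1 - q)), f x = 0) :
    ∀ x : ℝ, f x = 0 := by
  obtain ⟨δ, hδ, hfδ⟩ := hδ
  have hvanish : ∀ x, q / (1 - q) - δ < x → f x = 0 := fun x hx ↦
    (le_or_gt x (q / (1 - q))).elim (fun hxQ ↦ hfδ x ⟨hx, hxQ⟩)
      fun hxQ ↦ hfv x (lt_of_lt_of_le hxQ (le_abs_self x))
  have hc : 0 < min 1 ((1 - q) / q * δ) :=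
    lt_min one_pos (mul_pos (div_pos (by linarith [hq.2]) hq.1) hδ)
  intro x
  obtain ⟨n, hn⟩ := exists_nat_gt ((q / (1 - q) - δ - x) / min 1 ((1 - q) / q * δ))
  refine schilling_vanish_Ioi_sub_nat_mul hq hfe hδ.le hvanish n x ?_
  rw [div_lt_iff₀ hc] at hn
  linarith
end

section
/- Let q ∈ (0,1), Q = q/(1−q), and let f : ℝ → ℝ be a solution of Schilling's problem for q. If there exists δ > 0 such that f vanishes on the interval [−Q, −Q + δ), then f vanishes everywhere on ℝ. -/
/-!
Read at `x = y - 1`, the functional equation expresses `f y` through `f (y - 1)`, `f (y - 2)` and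
`f (q * (y - 1))`. Hence if `f` vanishes on `(-∞, t)`, it vanishes on `(-∞, s)` whenever
`s ≤ t + 1` and `q * (s - 1) ≤ t`. The point `-Q` is the fixed point of `t ↦ t / q + 1`, so once
`t ≥ -Q + δ` the zero set can be pushed right by the fixed amount `min 1 (δ * (1 - q))`, and
finitely many pushes cover every real number.
-/

open Set

theorem eq_zero_of_eqOn_Iio_of_forall_add {M : Type*} [Zero M] {f : ℝ → M} {t₀ ε : ℝ}
    (hε : 0 < ε) (h₀ : EqOn f 0 (Iio t₀))
    (hstep : ∀ t ≥ t₀, EqOn f 0 (Iio t) → EqOn f 0 (Iio (t + ε))) (x : ℝ) : f x = 0 := by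
  have hiter : ∀ n : ℕ, EqOn f 0 (Iio (t₀ + n * ε)) := by
    intro n
    induction n with
    | zero => simpa using h₀
    | succ n ih =>
      rw [Nat.cast_succ, add_one_mul, ← add_assoc]
      exact hstep _ (le_add_of_nonneg_right (by positivity)) ih
  obtain ⟨n, hn⟩ := exists_nat_gt ((x - t₀) / ε)
  rw [div_lt_iff₀ hε] at hn
  exact hiter n (show x < t₀ + n * ε by linarith)

theorem schilling_eqOn_zero_Iio_of_le {q : ℝ} {f : ℝ → ℝ} (hq : 0 < q)
    (hfe : ∀ x : ℝ, f (q * x) = (1 / (4 * q)) * (f (x - 1) + f (x + 1) + 2 * f x))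
    {s t : ℝ} (ht : EqOn f 0 (Iio t)) (hs : s ≤ t + 1) (hsq : q * (s - 1) ≤ t) :
    EqOn f 0 (Iio s) := by
  intro y (hy : y < s)
  have h := hfe (y - 1)
  have hqy : q * (y - 1) < t := by nlinarith [mul_lt_mul_of_pos_left hy hq]
  rw [sub_sub, one_add_one_eq_two, sub_add_cancel, ht (show y - 2 < t by linarith),
    ht (show y - 1 < t by linarith), ht hqy] at h
  simpa [hq.ne'] using h.symm

theorem mul_add_min_sub_one_le {q δ t : ℝ} (hq1 : q < 1) (hδ : 0 ≤ δ)
    (ht : -(q / (1 - q)) + δ ≤ t) :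
    q * (t + min 1 (δ * (1 - q)) - 1) ≤ t := by
  have h1q : 0 < 1 - q := by linarith
  have hδt : δ * (1 - q) ≤ q + t * (1 - q) := by
    have := mul_le_mul_of_nonneg_right ht h1q.le
    rw [add_mul, neg_mul, div_mul_cancel₀ _ h1q.ne'] at this
    linarith
  have hε : 0 ≤ min 1 (δ * (1 - q)) := le_min zero_le_one (mul_nonneg hδ h1q.le)
  nlinarith [min_le_right 1 (δ * (1 - q)), mul_le_mul_of_nonneg_right hq1.le hε]

theorem schilling_vanish_left (q : ℝ) (hq : q ∈ Set.Ioo (0 : ℝ) 1)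
    (f : ℝ → ℝ)
    (hfe : ∀ x : ℝ, f (q * x) = (1 / (4 * q)) * (f (x - 1) + f (x + 1) + 2 * f x))
    (hfv : ∀ x : ℝ, |x| > q / (1 - q) → f x = 0)
    (hδ : ∃ δ > (0 : ℝ), ∀ x ∈ Set.Ico (-(q / (1 - q))) (-(q / (1 - q)) + δ), f x = 0) :
    ∀ x : ℝ, f x = 0 := by
  obtain ⟨δ, hδ0, hδv⟩ := hδ
  have hbase : EqOn f 0 (Iio (-(q / (1 - q)) + δ)) := by
    intro x hx
    rcases lt_or_ge x (-(q / (1 - q))) with hleft | hleft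
    · exact hfv x (lt_abs.2 (Or.inr (by linarith)))
    · exact hδv x ⟨hleft, hx⟩
  have hε : 0 < min 1 (δ * (1 - q)) := lt_min one_pos (mul_pos hδ0 (by linarith [hq.2]))
  refine eq_zero_of_eqOn_Iio_of_forall_add hε hbase fun t ht hvan => ?_
  exact schilling_eqOn_zero_Iio_of_le hq.1 hfe hvan (by linarith [min_le_left 1 (δ * (1 - q))])
    (mul_add_min_sub_one_le hq.2 hδ0.le ht)
end

section
/- Let q = (√5 − 1)/2 and let f : ℝ → ℝ be a solution of Schilling's problem for q. Then f(2q) = 0, f(−2q) = 0, f(2 − q) = 0, f(−2 + q) = 0, f(1 − q) = 0 and f(−1 + q) = 0. -/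
/-!
Since `q² = 1 - q`, the support bound `q / (1 - q)` equals `1 + q`, and `x ↦ q x` maps the points
`2 + q, 1 + q, 1, 0, 2, 1 + 2q, q` of `ℤ + ℤ q` to `1 + q, 1, q, 0, 2q, 2 - q, 1 - q`. The
functional equation at these points is a linear system in the values of `f` at finitely many
points of `ℤ + ℤ q`, all others involved lying outside the support. Its coefficients have the
form `a q + b` with `a ≠ 0` and `a, b` rational, hence are nonzero as `q` is irrational, and the
system forces all these values to vanish. Reflection `x ↦ -x` preserves solutions and supplies
the mirrored equations.
-/

structure IsSchillingSolution_s14 (q : ℝ) (f : ℝ → ℝ) : Prop where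
  apply_mul : ∀ x, f (q * x) = 1 / (4 * q) * (f (x - 1) + f (x + 1) + 2 * f x)
  eq_zero_of_lt_abs : ∀ x, q / (1 - q) < |x| → f x = 0

section GoldenConj

variable {q : ℝ}

theorem ne_zero_of_sq_eq_one_sub (hq : q ^ 2 = 1 - q) : q ≠ 0 := by
  rintro rfl
  norm_num at hq

theorem lt_one_of_sq_eq_one_sub (hq : q ^ 2 = 1 - q) : q < 1 := by
  nlinarith

theorem div_one_sub_eq_one_add_of_sq_eq (hq : q ^ 2 = 1 - q) : q / (1 - q) = 1 + q := by
  rw [div_eq_iff (sub_ne_zero.mpr (lt_one_of_sq_eq_one_sub hq).ne')]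
  linear_combination hq

end GoldenConj

namespace IsSchillingSolution_s14

variable {q : ℝ} {f : ℝ → ℝ}

theorem comp_neg_s14 (h : IsSchillingSolution_s14 q f) : IsSchillingSolution_s14 q (fun x => f (-x)) where
  apply_mul x := by
    rw [show -(q * x) = q * -x by ring, h.apply_mul, show -x - 1 = -(x + 1) by ring,
      show -x + 1 = -(x - 1) by ring, add_comm (f _) (f _)]
  eq_zero_of_lt_abs x hx := h.eq_zero_of_lt_abs (-x) (by rwa [abs_neg])

theorem four_mul_apply_eq (h : IsSchillingSolution_s14 q f) (hq : q ≠ 0) {x y a b : ℝ}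
    (hy : q * x = y) (ha : x - 1 = a) (hb : x + 1 = b) :
    4 * q * f y = f a + f b + 2 * f x := by
  rw [← hy, ← ha, ← hb, h.apply_mul]
  field_simp

section GoldenConj

variable (h : IsSchillingSolution_s14 q f) (hq : q ^ 2 = 1 - q)
include h hq

theorem apply_eq_zero_of_one_add_lt {x : ℝ} (hx : 1 + q < x) : f x = 0 :=
  h.eq_zero_of_lt_abs x <| by
    rw [div_one_sub_eq_one_add_of_sq_eq hq]
    exact hx.trans_le (le_abs_self x)

theorem apply_one_add_eq_zero : f (1 + q) = 0 := by
  have e : 4 * q * f (1 + q) = f (1 + q) + f (3 + q) + 2 * f (2 + q) :=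
    h.four_mul_apply_eq (ne_zero_of_sq_eq_one_sub hq) (by linear_combination hq) (by ring) (by ring)
  rw [h.apply_eq_zero_of_one_add_lt hq (by linarith : 1 + q < 3 + q),
    h.apply_eq_zero_of_one_add_lt hq (by linarith : 1 + q < 2 + q)] at e
  have hc : 4 * q - 1 ≠ 0 := by intro hc; nlinarith
  exact (mul_eq_zero.mp (by linear_combination e : (4 * q - 1) * f (1 + q) = 0)).resolve_left hc

theorem apply_eq_zero_of_one_add_le {x : ℝ} (hx : 1 + q ≤ x) : f x = 0 := by
  rcases hx.eq_or_lt with rfl | hx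
  · exact h.apply_one_add_eq_zero hq
  · exact h.apply_eq_zero_of_one_add_lt hq hx

theorem apply_self : f q = 4 * q * f 1 := by
  have e : 4 * q * f 1 = f q + f (2 + q) + 2 * f (1 + q) :=
    h.four_mul_apply_eq (ne_zero_of_sq_eq_one_sub hq) (by linear_combination hq) (by ring) (by ring)
  rw [h.apply_eq_zero_of_one_add_le hq (by linarith : 1 + q ≤ 2 + q), h.apply_one_add_eq_zero hq] at e
  linarith

theorem apply_zero_s14 : f 0 = (14 - 16 * q) * f 1 := by
  have e : 4 * q * f q = f 0 + f 2 + 2 * f 1 :=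
    h.four_mul_apply_eq (ne_zero_of_sq_eq_one_sub hq) (mul_one q) (by ring) (by ring)
  rw [h.apply_self hq,
    h.apply_eq_zero_of_one_add_le hq (by linarith [lt_one_of_sq_eq_one_sub hq] : 1 + q ≤ 2)] at e
  linear_combination -e + 16 * f 1 * hq

theorem apply_one_eq_zero : f 1 = 0 := by
  have e : 4 * q * f 0 = f (-1) + f 1 + 2 * f 0 :=
    h.four_mul_apply_eq (ne_zero_of_sq_eq_one_sub hq) (mul_zero q) (by ring) (by ring)
  have h0 := h.apply_zero_s14 hq
  have h0' : f 0 = (14 - 16 * q) * f (-1) := by simpa using h.comp_neg_s14.apply_zero_s14 hq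
  have hc : 14 - 16 * q ≠ 0 := by intro hc; nlinarith
  have hsymm : f (-1) = f 1 := mul_left_cancel₀ hc (h0'.symm.trans h0)
  have hc' : 152 * q - 94 ≠ 0 := by intro hc'; nlinarith
  refine (mul_eq_zero.mp (?_ : (152 * q - 94) * f 1 = 0)).resolve_left hc'
  linear_combination e - (4 * q - 2) * h0 + hsymm + 64 * f 1 * hq

theorem apply_two_mul_eq_zero : f (2 * q) = 0 := by
  have e : 4 * q * f (2 * q) = f 1 + f 3 + 2 * f 2 :=
    h.four_mul_apply_eq (ne_zero_of_sq_eq_one_sub hq) (mul_comm q 2) (by ring) (by ring)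
  have hq1 := lt_one_of_sq_eq_one_sub hq
  rw [h.apply_one_eq_zero hq, h.apply_eq_zero_of_one_add_le hq (by linarith : 1 + q ≤ 3),
    h.apply_eq_zero_of_one_add_le hq (by linarith : 1 + q ≤ 2)] at e
  simpa [ne_zero_of_sq_eq_one_sub hq] using e

theorem apply_two_sub_eq_zero (hpos : 0 < q) : f (2 - q) = 0 := by
  have e : 4 * q * f (2 - q) = f (2 * q) + f (2 + 2 * q) + 2 * f (1 + 2 * q) :=
    h.four_mul_apply_eq hpos.ne' (by linear_combination 2 * hq) (by ring) (by ring)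
  rw [h.apply_two_mul_eq_zero hq, h.apply_eq_zero_of_one_add_le hq (by linarith : 1 + q ≤ 2 + 2 * q),
    h.apply_eq_zero_of_one_add_le hq (by linarith : 1 + q ≤ 1 + 2 * q)] at e
  simpa [hpos.ne'] using e

theorem four_mul_apply_one_sub : 4 * q * f (1 - q) = f (q - 1) := by
  have e : 4 * q * f (1 - q) = f (q - 1) + f (q + 1) + 2 * f q :=
    h.four_mul_apply_eq (ne_zero_of_sq_eq_one_sub hq) (by linear_combination hq) rfl rfl
  rw [h.apply_self hq, h.apply_one_eq_zero hq, add_comm q 1, h.apply_one_add_eq_zero hq] at e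
  simpa using e

theorem apply_one_sub_eq_zero : f (1 - q) = 0 := by
  have e := h.four_mul_apply_one_sub hq
  have e' : 4 * q * f (q - 1) = f (1 - q) := by
    simpa using h.comp_neg_s14.four_mul_apply_one_sub hq
  have hc : 15 - 16 * q ≠ 0 := by intro hc; nlinarith
  refine (mul_eq_zero.mp (?_ : (15 - 16 * q) * f (1 - q) = 0)).resolve_left hc
  linear_combination 4 * q * e + e' - 16 * f (1 - q) * hq

end GoldenConj

end IsSchillingSolution_s14

theorem schilling_golden_more_values (q : ℝ) (hq : q = (Real.sqrt 5 - 1) / 2)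
    (f : ℝ → ℝ)
    (hfe : ∀ x : ℝ, f (q * x) = (1 / (4 * q)) * (f (x - 1) + f (x + 1) + 2 * f x))
    (hfv : ∀ x : ℝ, |x| > q / (1 - q) → f x = 0) :
    f (2 * q) = 0 ∧ f (-(2 * q)) = 0 ∧ f (2 - q) = 0 ∧ f (-2 + q) = 0 ∧
      f (1 - q) = 0 ∧ f (-1 + q) = 0 := by
  have hsqrt : Real.sqrt 5 ^ 2 = 5 := Real.sq_sqrt (by norm_num)
  have hq2 : q ^ 2 = 1 - q := by rw [hq]; linear_combination hsqrt / 4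
  have hpos : 0 < q := by
    rw [hq]
    linarith [Real.lt_sqrt_of_sq_lt (show (1 : ℝ) ^ 2 < 5 by norm_num)]
  have hf : IsSchillingSolution_s14 q f := ⟨hfe, hfv⟩
  have hf' := hf.comp_neg_s14
  refine ⟨hf.apply_two_mul_eq_zero hq2, hf'.apply_two_mul_eq_zero hq2,
    hf.apply_two_sub_eq_zero hq2 hpos, ?_, hf.apply_one_sub_eq_zero hq2, ?_⟩
  · simpa [neg_add_eq_sub] using hf'.apply_two_sub_eq_zero hq2 hpos
  · simpa [neg_add_eq_sub] using hf'.apply_one_sub_eq_zero hq2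
end
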